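/- Let n ≥ 1, δ ∈ (0, n], κ ∈ [0, δ), and let f : ℝⁿ → [−∞, ∞] be any function. Then the Hausdorff content centred fractional maximal function M^δ_κ f is lower semicontinuous on ℝⁿ; in particular, the set {x ∈ ℝⁿ : M^δ_κ f(x) > t} is open for every t ∈ ℝ. -/

import Mathlib

open Metric Set ENNReal

/-- The δ-dimensional Hausdorff content of a set `E ⊆ ℝⁿ`: the infimum of `∑ rᵢ^δ`
over all countable covers of `E` by open balls `B(xᵢ, rᵢ)`. -/
noncomputable def hContent (n : ℕ) (δ : ℝ) (E : Set (EuclideanSpace ℝ (Fin n))) : ℝ≥0∞ :=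
  ⨅ (c : ℕ → EuclideanSpace ℝ (Fin n)) (r : ℕ → NNReal)
    (_ : E ⊆ ⋃ i, Metric.ball (c i) (r i)), ∑' i, (r i : ℝ≥0∞) ^ δ

/-- The Choquet integral `∫_Ω f dH^δ_∞ = ∫_0^∞ H^δ_∞({x ∈ Ω : f x > t}) dt`. -/
noncomputable def choquet (n : ℕ) (δ : ℝ) (Ω : Set (EuclideanSpace ℝ (Fin n)))
    (f : EuclideanSpace ℝ (Fin n) → ℝ≥0∞) : ℝ≥0∞ :=
  ∫⁻ t in Set.Ioi (0 : ℝ), hContent n δ {x | x ∈ Ω ∧ ENNReal.ofReal t < f x}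

/-- The Hausdorff content centred fractional maximal function `M^δ_κ f`. -/
noncomputable def maxF (n : ℕ) (δ κ : ℝ) (f : EuclideanSpace ℝ (Fin n) → EReal)
    (x : EuclideanSpace ℝ (Fin n)) : ℝ≥0∞ :=
  ⨆ (r : ℝ) (_ : 0 < r),
    (ENNReal.ofReal (r ^ κ) / hContent n δ (Metric.ball x r)) *
      choquet n δ (Metric.ball x r) (fun y => (f y).abs)

/-! For `r > 0` the content `H^δ_∞(B(x, r))` equals `r^δ`: the one-ball cover gives `≤`, and for
`≥` a cover by balls of radii `rᵢ` has `r^n ≤ ∑ rᵢ^n` by comparing Lebesgue measure, which forces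
`r^δ ≤ ∑ rᵢ^δ` because `δ ≤ n`. Hence `M^δ_κ f(x) = sup_{r>0} r^κ/r^δ · ∫_{B(x,r)} |f| dH^δ_∞`.
If `t` is below the term of radius `r` at `x`, then for `y` close to `x` the ball `B(y, r + ε)`
contains `B(x, r)`, so by right continuity in the radius the term of radius `r + ε` at `y` is
still above `t`. -/

open Filter Topology MeasureTheory
open scoped NNReal

lemma hContent_mono {n : ℕ} {δ : ℝ} {E F : Set (EuclideanSpace ℝ (Fin n))} (h : E ⊆ F) :
    hContent n δ E ≤ hContent n δ F :=
  le_iInf fun c => le_iInf₂ fun r hF => iInf_le_of_le c (iInf₂_le_of_le r (h.trans hF) le_rfl)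

lemma choquet_mono {n : ℕ} {δ : ℝ} {Ω₁ Ω₂ : Set (EuclideanSpace ℝ (Fin n))} (h : Ω₁ ⊆ Ω₂)
    (g : EuclideanSpace ℝ (Fin n) → ℝ≥0∞) : choquet n δ Ω₁ g ≤ choquet n δ Ω₂ g :=
  lintegral_mono fun _ => hContent_mono fun _ hx => ⟨h hx.1, hx.2⟩

lemma hContent_ball_le {n : ℕ} {δ : ℝ} (hδ : 0 < δ) (x : EuclideanSpace ℝ (Fin n)) (r : ℝ) :
    hContent n δ (ball x r) ≤ ENNReal.ofReal r ^ δ := by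
  let ρ : ℕ → ℝ≥0 := fun i => if i = 0 then r.toNNReal else 0
  have hcover : ball x r ⊆ ⋃ i, ball x (ρ i) :=
    fun y hy => mem_iUnion.2 ⟨0, ball_subset_ball (by simp [ρ]) hy⟩
  calc hContent n δ (ball x r) ≤ ∑' i, (ρ i : ℝ≥0∞) ^ δ :=
        iInf_le_of_le _ (iInf₂_le_of_le ρ hcover le_rfl)
    _ = ENNReal.ofReal r ^ δ := by
      rw [tsum_eq_single 0 fun i hi => by simp [ρ, hi, zero_rpow_of_pos hδ]]
      simp [ρ, ENNReal.ofReal]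

theorem ENNReal.rpow_le_tsum_rpow_of_rpow_le_tsum_rpow {ι : Type*} {p q : ℝ} (hp : 0 < p)
    (hpq : p ≤ q) {R : ℝ≥0∞} (hR : R ≠ ⊤) {a : ι → ℝ≥0∞} (h : R ^ q ≤ ∑' i, a i ^ q) :
    R ^ p ≤ ∑' i, a i ^ p := by
  rcases eq_or_ne R 0 with rfl | hR0
  · simp [zero_rpow_of_pos hp]
  by_cases hlarge : ∃ i, R ≤ a i
  · obtain ⟨i, hi⟩ := hlarge
    exact (rpow_le_rpow hi hp.le).trans (ENNReal.le_tsum i)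
  push Not at hlarge
  have hqp : 0 ≤ q - p := sub_nonneg.2 hpq
  have hsplit : ∀ b : ℝ≥0∞, b ^ q = b ^ p * b ^ (q - p) := fun b => by
    rw [← rpow_add_of_nonneg (x := b) _ _ hp.le hqp, add_sub_cancel]
  -- each `a i < R`, so `a i ^ q ≤ a i ^ p * R ^ (q - p)`
  refine (ENNReal.mul_le_mul_iff_left (c := R ^ (q - p)) (by simp [hR0, hR])
    (by simp [hR0, hR])).1 ?_
  calc R ^ p * R ^ (q - p) = R ^ q := (hsplit R).symm
    _ ≤ ∑' i, a i ^ q := h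
    _ ≤ ∑' i, a i ^ p * R ^ (q - p) := ENNReal.tsum_le_tsum fun i => by
      rw [hsplit]; exact mul_le_mul_right (rpow_le_rpow (hlarge i).le hqp) _
    _ = (∑' i, a i ^ p) * R ^ (q - p) := ENNReal.tsum_mul_right

theorem ofReal_pow_finrank_le_tsum_of_ball_subset_iUnion {E : Type*} [NormedAddCommGroup E]
    [NormedSpace ℝ E] [FiniteDimensional ℝ E] {ι : Type*} [Countable ι] {x : E} {r : ℝ}
    (hr : 0 < r) {c : ι → E} {ρ : ι → ℝ≥0} (h : ball x r ⊆ ⋃ i, ball (c i) (ρ i)) :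
    ENNReal.ofReal r ^ Module.finrank ℝ E ≤ ∑' i, (ρ i : ℝ≥0∞) ^ Module.finrank ℝ E := by
  borelize E
  let μ : Measure E := Measure.addHaar
  have hunit₀ : μ (ball 0 1) ≠ 0 := (measure_ball_pos μ _ one_pos).ne'
  have hunit : μ (ball 0 1) ≠ ⊤ := measure_ball_lt_top.ne
  refine (ENNReal.mul_le_mul_iff_left hunit₀ hunit).1 ?_
  calc ENNReal.ofReal r ^ Module.finrank ℝ E * μ (ball 0 1) = μ (ball x r) := by
        rw [Measure.addHaar_ball_of_pos μ x hr, ENNReal.ofReal_pow hr.le]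
    _ ≤ ∑' i, μ (ball (c i) (ρ i)) := (measure_mono h).trans (measure_iUnion_le _)
    _ ≤ ∑' i, μ (closedBall (c i) (ρ i)) :=
        ENNReal.tsum_le_tsum fun i => measure_mono ball_subset_closedBall
    _ = (∑' i, (ρ i : ℝ≥0∞) ^ Module.finrank ℝ E) * μ (ball 0 1) := by
        rw [← ENNReal.tsum_mul_right]
        congr 1 with i
        rw [Measure.addHaar_closedBall μ _ (ρ i).coe_nonneg, ENNReal.ofReal_pow (ρ i).coe_nonneg,
          ofReal_coe_nnreal]

lemma le_hContent_ball {n : ℕ} {δ : ℝ} (hδ0 : 0 < δ) (hδn : δ ≤ n)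
    (x : EuclideanSpace ℝ (Fin n)) {r : ℝ} (hr : 0 < r) :
    ENNReal.ofReal r ^ δ ≤ hContent n δ (ball x r) := by
  refine le_iInf fun c => le_iInf₂ fun ρ hcover => ?_
  refine rpow_le_tsum_rpow_of_rpow_le_tsum_rpow hδ0 hδn ofReal_ne_top ?_
  simpa [finrank_euclideanSpace_fin, ← rpow_natCast] using
    ofReal_pow_finrank_le_tsum_of_ball_subset_iUnion hr hcover

lemma hContent_ball {n : ℕ} {δ : ℝ} (hδ0 : 0 < δ) (hδn : δ ≤ n)
    (x : EuclideanSpace ℝ (Fin n)) {r : ℝ} (hr : 0 < r) :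
    hContent n δ (ball x r) = ENNReal.ofReal r ^ δ :=
  le_antisymm (hContent_ball_le hδ0 x r) (le_hContent_ball hδ0 hδn x hr)

theorem lowerSemicontinuous_iSup_mul_ball {X : Type*} [PseudoMetricSpace X] {φ : ℝ → ℝ≥0∞}
    (hφ : ContinuousOn φ (Ioi 0)) {Ψ : Set X → ℝ≥0∞} (hΨ : Monotone Ψ) :
    LowerSemicontinuous fun x => ⨆ (r : ℝ) (_ : 0 < r), φ r * Ψ (ball x r) := by
  intro x t ht
  obtain ⟨r, hr, htr⟩ : ∃ r, 0 < r ∧ t < φ r * Ψ (ball x r) := by simpa [lt_iSup_iff] using ht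
  have hφr : φ r ≠ 0 := by rintro h; simp [h] at htr
  have htendsto : Tendsto (fun s => φ s * Ψ (ball x r)) (𝓝[>] r) (𝓝 (φ r * Ψ (ball x r))) :=
    ENNReal.Tendsto.mul_const
      ((hφ.continuousAt (Ioi_mem_nhds hr)).tendsto.mono_left nhdsWithin_le_nhds) (Or.inl hφr)
  obtain ⟨s, hts, hrs⟩ := ((htendsto.eventually (lt_mem_nhds htr)).and self_mem_nhdsWithin).exists
  filter_upwards [ball_mem_nhds x (sub_pos.2 hrs)] with y hy
  have hball : ball x r ⊆ ball y s :=
    ball_subset_ball' (by rw [dist_comm]; linarith [mem_ball.1 hy])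
  exact hts.trans_le (le_iSup₂_of_le s (hr.trans hrs) (mul_le_mul_right (hΨ hball) _))

theorem maxF_lowerSemicontinuous_general (n : ℕ) (δ κ : ℝ) (hδ0 : 0 < δ) (hδn : δ ≤ n)
    (f : EuclideanSpace ℝ (Fin n) → EReal) :
    LowerSemicontinuous (maxF n δ κ f) ∧
      ∀ t : ℝ≥0∞, IsOpen {x : EuclideanSpace ℝ (Fin n) | t < maxF n δ κ f x} := by
  have hmaxF : maxF n δ κ f = fun x => ⨆ (r : ℝ) (_ : 0 < r),
      ENNReal.ofReal (r ^ κ / r ^ δ) * choquet n δ (ball x r) fun y => (f y).abs := by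
    ext x
    refine iSup_congr fun r => iSup_congr fun hr => ?_
    rw [hContent_ball hδ0 hδn x hr, ENNReal.ofReal_rpow_of_pos hr,
      ENNReal.ofReal_div_of_pos (Real.rpow_pos_of_pos hr δ)]
  have hlsc : LowerSemicontinuous (maxF n δ κ f) := by
    rw [hmaxF]
    refine lowerSemicontinuous_iSup_mul_ball ?_ fun _ _ h => choquet_mono h _
    refine ENNReal.continuous_ofReal.comp_continuousOn ?_
    exact ContinuousOn.div (by fun_prop (disch := grind)) (by fun_prop (disch := grind))
      fun r hr => (Real.rpow_pos_of_pos hr δ).ne'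
  exact ⟨hlsc, fun t => lowerSemicontinuous_iff_isOpen_preimage.1 hlsc t⟩

/-- The Hausdorff content centred fractional maximal function `M^δ_κ f` of an arbitrary
function `f : ℝⁿ → [-∞, ∞]` is lower semicontinuous; in particular its superlevel sets
are open. -/
theorem maxF_lowerSemicontinuous (n : ℕ) (hn : 1 ≤ n) (δ κ : ℝ) (hδ0 : 0 < δ) (hδn : δ ≤ n)
    (hκ0 : 0 ≤ κ) (hκδ : κ < δ) (f : EuclideanSpace ℝ (Fin n) → EReal) :
    LowerSemicontinuous (maxF n δ κ f) ∧
      ∀ t : ℝ≥0∞, IsOpen {x : EuclideanSpace ℝ (Fin n) | t < maxF n δ κ f x} :=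
  maxF_lowerSemicontinuous_general n δ κ hδ0 hδn f
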